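/- arXiv:2406.16405 — 2 statements merged into one kernel-verified Lean document; each statement's English description precedes it below -/
import Mathlib

section
/- For naturals n, k, p with p ≥ 1 and n ≥ (p+1)k, each word α_{n,k}^{i,j} = 0^{pj-i} 1^{j-1} 0^i 1 (0^p 1)^{k-j} 0^{n-(p+1)k}, for 0 ≤ i ≤ p-1 and 1 ≤ j ≤ k, belongs to C_n(p,k): it has length n, weight k, and every prefix contains at least p times as many zeros as ones. -/
def prefOK (p : ℕ) (w : List Bool) : Prop :=
  ∀ u v : List Bool, w = u ++ v → p * u.count true ≤ u.count false

/-- `α_{n,k}^{i,j} = 0^{pj-i} 1^{j-1} 0^i 1 (0^p 1)^{k-j} 0^{n-(p+1)k}` -/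
def alphaC (n p k i j : ℕ) : List Bool :=
  List.replicate (p * j - i) false ++ List.replicate (j - 1) true ++
    List.replicate i false ++ [true] ++
    (List.replicate (k - j) (List.replicate p false ++ [true])).flatten ++
    List.replicate (n - (p + 1) * k) false

/-!
Being `p`-dominated (every prefix has at least `p` times as many zeros as ones) is closed under
concatenation, since the whole first factor is itself a prefix. The blocks `0^p 1` and the
trailing zeros are `p`-dominated, and so is the head `0^{pj-i} 1^{j-1} 0^i 1`: since `i ≤ p`,
at least `p (j - 1)` zeros precede its first `j - 1` ones, and exactly `pj` precede its `j`-th.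
-/

section PrefOK

variable {p : ℕ}

lemma prefOK_iff_isPrefix {w : List Bool} :
    prefOK p w ↔ ∀ u, u <+: w → p * u.count true ≤ u.count false := by
  constructor
  · rintro h u ⟨v, rfl⟩
    exact h u v rfl
  · rintro h u v rfl
    exact h u (List.prefix_append u v)

lemma prefOK.count_le {w : List Bool} (h : prefOK p w) : p * w.count true ≤ w.count false :=
  h w [] (List.append_nil w).symm

lemma prefOK_nil (p : ℕ) : prefOK p [] := by
  simp [prefOK_iff_isPrefix]

lemma prefOK_concat_iff {x : List Bool} {b : Bool} :
    prefOK p (x ++ [b]) ↔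
      prefOK p x ∧ p * (x ++ [b]).count true ≤ (x ++ [b]).count false := by
  simp only [prefOK_iff_isPrefix, List.prefix_concat_iff, or_imp, forall_and, forall_eq]
  exact and_comm

lemma prefOK_append_replicate_false {x : List Bool} (hx : prefOK p x) (c : ℕ) :
    prefOK p (x ++ List.replicate c false) := by
  induction c with
  | zero => simpa using hx
  | succ c ih =>
    rw [List.replicate_succ', ← List.append_assoc, prefOK_concat_iff]
    refine ⟨ih, ?_⟩
    have := ih.count_le
    simp only [List.count_append, List.count_singleton] at this ⊢
    simpa using this.trans (Nat.le_succ _)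

lemma prefOK_replicate_false (p c : ℕ) : prefOK p (List.replicate c false) := by
  simpa using prefOK_append_replicate_false (prefOK_nil p) c

lemma prefOK_append_replicate_true {x : List Bool} {b : ℕ} (hx : prefOK p x)
    (hb : p * (x.count true + b) ≤ x.count false) :
    prefOK p (x ++ List.replicate b true) := by
  induction b with
  | zero => simpa using hx
  | succ b ih =>
    rw [List.replicate_succ', ← List.append_assoc, prefOK_concat_iff]
    refine ⟨ih (le_trans (Nat.mul_le_mul_left p (by omega)) hb), ?_⟩
    simpa [List.count_replicate, Nat.add_assoc] using hb

lemma prefOK_append {x y : List Bool} (hx : prefOK p x) (hy : prefOK p y) :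
    prefOK p (x ++ y) := by
  induction y using List.reverseRecOn with
  | nil => simpa using hx
  | append_singleton y b ih =>
    rw [prefOK_concat_iff] at hy
    rw [← List.append_assoc, prefOK_concat_iff]
    refine ⟨ih hy.1, ?_⟩
    simp only [List.append_assoc, List.count_append (l₁ := x), Nat.mul_add]
    exact Nat.add_le_add hx.count_le hy.2

lemma prefOK_flatten {L : List (List Bool)} (h : ∀ w ∈ L, prefOK p w) :
    prefOK p L.flatten := by
  induction L with
  | nil => exact prefOK_nil p
  | cons w L ih =>
    rw [List.forall_mem_cons] at h
    exact prefOK_append h.1 (ih h.2)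

lemma prefOK_head {a b c : ℕ} (hb : p * b ≤ a) (hc : p * (b + 1) ≤ a + c) :
    prefOK p (List.replicate a false ++ List.replicate b true ++
      List.replicate c false ++ [true]) := by
  refine prefOK_append_replicate_true (b := 1)
    (prefOK_append_replicate_false
      (prefOK_append_replicate_true (prefOK_replicate_false p a) ?_) c) ?_
  · simpa [List.count_replicate] using hb
  · simpa [List.count_replicate] using hc

lemma prefOK_block (p : ℕ) : prefOK p (List.replicate p false ++ [true]) :=
  prefOK_append_replicate_true (b := 1) (prefOK_replicate_false p p) (by simp [List.count_replicate])

end PrefOK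

theorem alphaC_mem_general (n p k i j : ℕ) (hn : (p + 1) * k ≤ n)
    (hi : i ≤ p - 1) (hj1 : 1 ≤ j) (hjk : j ≤ k) :
    (alphaC n p k i j).length = n ∧ (alphaC n p k i j).count true = k ∧
      prefOK p (alphaC n p k i j) := by
  have hip : i ≤ p := hi.trans (Nat.sub_le p 1)
  have hipj : i ≤ p * j := hip.trans (Nat.le_mul_of_pos_right p hj1)
  refine ⟨?_, ?_, ?_⟩
  · simp only [alphaC, List.length_append, List.length_replicate, List.length_singleton,
      List.length_flatten, List.map_replicate, List.sum_replicate, smul_eq_mul]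
    zify [hipj, hj1, hjk, hn]
    ring
  · simp only [alphaC, List.count_append, List.count_replicate, List.count_singleton_self,
      List.count_flatten, List.map_replicate, List.sum_replicate, smul_eq_mul, beq_true,
      Bool.false_eq_true, ↓reduceIte, BEq.rfl, zero_add, add_zero, mul_one]
    omega
  · refine prefOK_append_replicate_false (prefOK_append (prefOK_head ?_ ?_) ?_) _
    · rw [Nat.mul_sub_one]
      omega
    · rw [Nat.sub_add_cancel hj1]
      omega
    · refine prefOK_flatten fun w hw => ?_
      rw [List.eq_of_mem_replicate hw]
      exact prefOK_block p

theorem alphaC_mem (n p k i j : ℕ) (hp : 1 ≤ p) (hn : (p + 1) * k ≤ n)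
    (hi : i ≤ p - 1) (hj1 : 1 ≤ j) (hjk : j ≤ k) :
    (alphaC n p k i j).length = n ∧ (alphaC n p k i j).count true = k ∧
      prefOK p (alphaC n p k i j) :=
  alphaC_mem_general n p k i j hn hi hj1 hjk
end

section
/- For n ≥ 2k and any α in F_n(2,k) with α ≠ γ_{n,k} = 0^{n-2k}(01)^k, the greedy homogeneous-transposition list started at α ends with γ_{n,k}. -/
/-- Result of transposing positions `i` (a `1`) and `j` (a `0`). -/
def applyT (w : List Bool) (i j : ℕ) : List Bool := (w.set i false).set j true

/-- `(i, j)` is a homogeneous transposition for `w`. -/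
def okT (w : List Bool) (i j : ℕ) : Prop :=
  i < w.length ∧ j < w.length ∧ w.getD i false = true ∧ w.getD j false = false ∧
    ∀ t, min i j < t → t < max i j → w.getD t false = false

/-- `L` is the list produced by the greedy Gray code algorithm for the set of
words satisfying `P`, started at `α`: each step performs the homogeneous
transposition with leftmost possible `1` and then leftmost possible `0`
producing a word satisfying `P` not yet listed, and the process runs until
no further step is possible. -/
def IsGreedyList (P : List Bool → Prop) (α : List Bool) (L : List (List Bool)) : Prop :=
  L.head? = some α ∧ L.Nodup ∧ (∀ w ∈ L, P w) ∧
  (∀ m, m + 1 < L.length →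
    ∃ i j, okT (L.getD m []) i j ∧ L.getD (m + 1) [] = applyT (L.getD m []) i j ∧
      ∀ i' j', okT (L.getD m []) i' j' → P (applyT (L.getD m []) i' j') →
        applyT (L.getD m []) i' j' ∉ L.take (m + 1) →
        i < i' ∨ (i = i' ∧ j ≤ j')) ∧
  (∀ i j, okT (L.getD (L.length - 1) []) i j →
    P (applyT (L.getD (L.length - 1) []) i j) →
    applyT (L.getD (L.length - 1) []) i j ∈ L)

/-- `α` is a generator: the greedy list started at `α` exhausts the words satisfying `P`. -/
def IsGen (P : List Bool → Prop) (α : List Bool) : Prop :=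
  P α ∧ ∃ L, IsGreedyList P α L ∧ ∀ w, P w → w ∈ L

def memF (n k : ℕ) (w : List Bool) : Prop :=
  w.length = n ∧ w.count true = k ∧ ¬ [true, true] <:+: w

/-- `γ_{n,k} = 0^{n-2k} (01)^k` -/
def gammaF (n k : ℕ) : List Bool :=
  List.replicate (n - 2 * k) false ++ (List.replicate k [false, true]).flatten

/-!
Write `m = n - 2k`. Every word `w ≠ γ` of `F_n(2,k)` admits a homogeneous transposition inside
`F_n(2,k)` moving a `1` from below up to the highest position `q` at which `w` and `γ` differ:
comparing the number of `1`s up to `q` shows that `γ` has its `1` at `q` and `w` has one below.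
After this descent the word agrees with `γ` from `q` on. Along a greedy list the highest mismatch
with `γ` therefore never rises: the descent move is always new, and any move the greedy rule
prefers acts below `q`. If the list stopped at a word other than `γ`, its descent move would lead
back to a listed word agreeing with `γ` beyond the last word's mismatch, which is impossible.

It remains that `γ` cannot occur before the end. Let `σ_j` be `γ` with its first `1` (at `m + 1`)
moved to `j ≤ m`; these are exactly the words of `F_n(2,k)` one homogeneous transposition away
from `γ`. The list reaches `γ` from some `σ_i` by the move `(i, m + 1)`. Every `σ_j` is reached
from `σ_i` by the lexicographically smaller move `(i, j)`, so the greedy rule has visited all of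
them already, and `γ` has no new successor.
-/

theorem List.ext_getD_false {w v : List Bool} (hl : w.length = v.length)
    (h : ∀ t, w.getD t false = v.getD t false) : w = v :=
  List.ext_getElem hl fun t h1 h2 => by
    rw [← List.getD_eq_getElem w false h1, ← List.getD_eq_getElem v false h2, h t]

theorem List.getD_false_eq_true_iff {w : List Bool} {t : ℕ} :
    w.getD t false = true ↔ w[t]? = some true := by
  rw [List.getD_eq_getElem?_getD]
  cases w[t]? <;> simp

theorem List.lt_length_of_getD_false_eq_true {w : List Bool} {t : ℕ}
    (h : w.getD t false = true) : t < w.length :=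
  (List.getElem?_eq_some_iff.1 (List.getD_false_eq_true_iff.1 h)).1

theorem List.true_mem_take_iff {w : List Bool} {s : ℕ} :
    true ∈ w.take s ↔ ∃ t < s, w.getD t false = true := by
  simp only [List.mem_take_iff_getElem, List.getD_false_eq_true_iff, List.getElem?_eq_some_iff]
  constructor
  · rintro ⟨t, ht, h⟩
    exact ⟨t, by omega, by omega, h⟩
  · rintro ⟨t, hts, htw, h⟩
    exact ⟨t, by omega, h⟩

theorem List.infix_true_true_iff (w : List Bool) :
    [true, true] <:+: w ↔ ∃ t, w.getD t false = true ∧ w.getD (t + 1) false = true := by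
  simp only [List.infix_iff_getElem?, List.getD_false_eq_true_iff]
  constructor
  · rintro ⟨t, -, h⟩
    exact ⟨t, by simpa using h 0 (by simp), by simpa [Nat.add_comm] using h 1 (by simp)⟩
  · rintro ⟨t, h0, h1⟩
    have := (List.getElem?_eq_some_iff.1 h1).1
    refine ⟨t, by simp only [List.length_cons, List.length_nil]; omega, fun i hi => ?_⟩
    obtain _ | _ | i := i
    · simpa using h0
    · simpa [Nat.add_comm] using h1
    · simp only [List.length_cons, List.length_nil] at hi
      omega

theorem List.mem_take_succ_iff_getD {α : Type*} {L : List α} {t : ℕ} (ht : t < L.length)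
    (d : α) {w : α} : w ∈ L.take (t + 1) ↔ w ∈ L.take t ∨ w = L.getD t d := by
  rw [List.take_add_one, List.getElem?_eq_getElem ht, List.getD_eq_getElem _ _ ht,
    List.mem_append, Option.toList_some, List.mem_singleton]

theorem List.Nodup.getD_not_mem_take {α : Type*} {L : List α} (hL : L.Nodup) {s t : ℕ}
    (hst : s ≤ t) (ht : t < L.length) (d : α) : L.getD t d ∉ L.take s := by
  rw [List.getD_eq_getElem _ _ ht, List.mem_take_iff_getElem]
  rintro ⟨r, hr, hrt⟩
  have := hL.getElem_inj_iff.1 hrt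
  omega

section Transposition

variable {w : List Bool} {i j : ℕ}

theorem length_applyT : (applyT w i j).length = w.length := by
  simp [applyT]

theorem getD_applyT (hj : j < w.length) (t : ℕ) :
    (applyT w i j).getD t false =
      if t = j then true else if t = i then false else w.getD t false := by
  simp only [applyT, List.getD_eq_getElem?_getD, List.getElem?_set, List.length_set]
  split_ifs <;> subst_vars <;> simp_all

theorem okT.ne (h : okT w i j) : i ≠ j := by
  rintro rfl
  exact absurd h.2.2.1 (by rw [h.2.2.2.1]; decide)

theorem okT.count_applyT (h : okT w i j) : (applyT w i j).count true = w.count true := by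
  have hij := h.ne
  obtain ⟨hi, hj, hti, htj, -⟩ := h
  rw [List.getD_eq_getElem _ _ hi] at hti
  rw [List.getD_eq_getElem _ _ hj] at htj
  have hpos : 0 < w.count true := List.count_pos_iff.2 (hti ▸ List.getElem_mem hi)
  rw [applyT, List.count_set (by simpa using hj), List.count_set hi,
    List.getElem_set_ne hij, hti, htj]
  simp only [beq_self_eq_true, if_true, Bool.false_beq, Bool.not_true]
  omega

theorem okT.applyT_symm (h : okT w i j) : okT (applyT w i j) j i := by
  have hij := h.ne
  obtain ⟨hi, hj, -, -, hbet⟩ := h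
  refine ⟨by rwa [length_applyT], by rwa [length_applyT], ?_, ?_, fun t h1 h2 => ?_⟩
  · rw [getD_applyT hj, if_pos rfl]
  · rw [getD_applyT hj, if_neg hij, if_pos rfl]
  · rw [getD_applyT hj, if_neg (by omega), if_neg (by omega)]
    exact hbet t (by omega) (by omega)

theorem okT.applyT_applyT_symm (h : okT w i j) : applyT (applyT w i j) j i = w := by
  refine List.ext_getD_false (by rw [length_applyT, length_applyT]) fun t => ?_
  rw [getD_applyT (by rw [length_applyT]; exact h.1), getD_applyT h.2.1]
  by_cases hti : t = i
  · rw [if_pos hti, hti, h.2.2.1]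
  · by_cases htj : t = j
    · rw [if_neg hti, if_pos htj, htj, h.2.2.2.1]
    · rw [if_neg hti, if_neg htj, if_neg htj, if_neg hti]

theorem okT.le_of_lex_le {i' j' : ℕ} (h : okT w i j) (hi' : w.getD i' false = true)
    (hlt : i' < j') (hlex : i < i' ∨ i = i' ∧ j ≤ j') : j ≤ j' := by
  by_contra hj
  rcases hlex with hii | ⟨-, hjj⟩
  · have := h.2.2.2.2 i' (by omega) (by omega)
    rw [hi'] at this
    exact Bool.false_ne_true this.symm
  · omega

theorem not_infix_applyT (hw : ¬ [true, true] <:+: w) (hj : j < w.length)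
    (hleft : ∀ t, t + 1 = j → t ≠ i → w.getD t false = false)
    (hright : j + 1 ≠ i → w.getD (j + 1) false = false) :
    ¬ [true, true] <:+: applyT w i j := by
  rw [List.infix_true_true_iff] at hw ⊢
  rintro ⟨t, h0, h1⟩
  rw [getD_applyT hj] at h0 h1
  split_ifs at h0 h1 <;> grind

end Transposition

def AgreesFrom (v w : List Bool) (p : ℕ) : Prop :=
  ∀ s, p ≤ s → w.getD s false = v.getD s false

section Agreement

variable {v w : List Bool}

theorem AgreesFrom.mono {p q : ℕ} (h : AgreesFrom v w p) (hpq : p ≤ q) : AgreesFrom v w q :=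
  fun s hs => h s (hpq.trans hs)

theorem AgreesFrom.applyT_of_le {i j q : ℕ} (h : AgreesFrom v w (q + 1)) (hi : i ≤ q)
    (hj : j ≤ q) (hjw : j < w.length) : AgreesFrom v (applyT w i j) (q + 1) := by
  intro s hs
  rw [getD_applyT hjw, if_neg (by omega), if_neg (by omega)]
  exact h s hs

theorem AgreesFrom.applyT_of_getD_ne {i q : ℕ} (h : AgreesFrom v w (q + 1)) (hok : okT w i q)
    (hiq : i < q) (hq : w.getD q false ≠ v.getD q false) : AgreesFrom v (applyT w i q) q := by
  intro s hs
  rw [getD_applyT hok.2.1]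
  rcases hs.eq_or_lt with rfl | hlt
  · rw [hok.2.2.2.1] at hq
    rw [if_pos rfl]
    exact (eq_true_of_ne_false hq.symm).symm
  · rw [if_neg (by omega), if_neg (by omega)]
    exact h s hlt

theorem exists_getD_ne_agreesFrom_succ (hl : w.length = v.length) (hne : w ≠ v) :
    ∃ q, w.getD q false ≠ v.getD q false ∧ AgreesFrom v w (q + 1) := by
  have hbound : ∀ q, w.length ≤ q → w.getD q false = v.getD q false := fun q hq => by
    rw [List.getD_eq_default _ _ hq, List.getD_eq_default _ _ (hl ▸ hq)]
  obtain ⟨q₀, hq₀⟩ : ∃ q, w.getD q false ≠ v.getD q false := by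
    by_contra! h
    exact hne (List.ext_getD_false hl h)
  have hq₀l : q₀ ≤ w.length := by
    by_contra
    exact hq₀ (hbound q₀ (by omega))
  set P := fun q => w.getD q false ≠ v.getD q false
  refine ⟨Nat.findGreatest P w.length, Nat.findGreatest_spec (P := P) hq₀l hq₀,
    fun s hs => ?_⟩
  by_cases hsl : s ≤ w.length
  · simpa [P] using Nat.findGreatest_is_greatest (P := P) (by omega) hsl
  · exact hbound s (by omega)

theorem exists_getD_le_iff_of_agreesFrom {q : ℕ} (hl : w.length = v.length)
    (hc : w.count true = v.count true) (h : AgreesFrom v w (q + 1)) :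
    (∃ t ≤ q, w.getD t false = true) ↔ ∃ t ≤ q, v.getD t false = true := by
  have hdrop : w.drop (q + 1) = v.drop (q + 1) :=
    List.ext_getD_false (by simp [hl]) fun s => by
      simp only [List.getD_eq_getElem?_getD, List.getElem?_drop]
      exact h _ (by omega)
  have htake : (w.take (q + 1)).count true = (v.take (q + 1)).count true := by
    rw [← List.take_append_drop (q + 1) w, ← List.take_append_drop (q + 1) v,
      List.count_append, List.count_append, hdrop] at hc
    omega
  simp only [Nat.le_iff_lt_add_one, ← List.true_mem_take_iff, ← List.count_pos_iff, htake]

end Agreement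

def DescentTo (P : List Bool → Prop) (v : List Bool) : Prop :=
  ∀ w, P w → w ≠ v → ∃ i q, i < q ∧ okT w i q ∧ P (applyT w i q) ∧
    w.getD q false ≠ v.getD q false ∧ AgreesFrom v w (q + 1)

section Greedy

variable {P : List Bool → Prop} {α v : List Bool} {L : List (List Bool)}

theorem IsGreedyList.getD_zero (hL : IsGreedyList P α L) : L.getD 0 [] = α := by
  cases L with
  | nil => exact absurd hL.1 (by simp)
  | cons a L => simpa using hL.1

theorem IsGreedyList.prop_getD (hL : IsGreedyList P α L) {t : ℕ} (ht : t < L.length) :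
    P (L.getD t []) :=
  hL.2.2.1 _ (by rw [List.getD_eq_getElem _ _ ht]; exact List.getElem_mem ht)

theorem IsGreedyList.agreesFrom_getD_succ (hL : IsGreedyList P α L) (hdesc : DescentTo P v)
    {t p : ℕ} (ht : t + 1 < L.length) (hvt : L.getD t [] ≠ v)
    (hpast : ∀ w ∈ L.take (t + 1), ∀ q, AgreesFrom v w q → AgreesFrom v (L.getD t []) q)
    (hp : AgreesFrom v (L.getD t []) p) : AgreesFrom v (L.getD (t + 1) []) p := by
  obtain ⟨i, q, hiq, hok, hPc, hq, hagree⟩ := hdesc _ (hL.prop_getD (by omega)) hvt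
  obtain ⟨-, -, -, hstep, -⟩ := hL
  have hqp : q < p := by
    by_contra hpq
    exact hq (hp q (by omega))
  have hnew : applyT (L.getD t []) i q ∉ L.take (t + 1) := fun hc =>
    hq (hpast _ hc q (hagree.applyT_of_getD_ne hok hiq hq) q le_rfl)
  obtain ⟨i₀, j₀, hok₀, hnext, hmin⟩ := hstep t ht
  have hlex := hmin i q hok hPc hnew
  rw [hnext]
  have hj₀ : j₀ ≤ q := hok₀.le_of_lex_le hok.2.2.1 hiq hlex
  exact (hagree.applyT_of_le (by omega) hj₀ hok₀.2.1).mono hqp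

theorem IsGreedyList.agreesFrom_getD (hL : IsGreedyList P α L) (hdesc : DescentTo P v)
    (hv : ∀ t, t + 1 < L.length → L.getD t [] ≠ v) {t : ℕ} (ht : t < L.length) :
    ∀ w ∈ L.take (t + 1), ∀ p, AgreesFrom v w p → AgreesFrom v (L.getD t []) p := by
  induction t with
  | zero =>
    intro w hw p hp
    rw [List.mem_take_succ_iff_getD ht [], List.take_zero] at hw
    rcases hw with hw | rfl
    · exact absurd hw List.not_mem_nil
    · exact hp
  | succ t ih =>
    intro w hw p hp
    rw [List.mem_take_succ_iff_getD ht []] at hw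
    rcases hw with hw | rfl
    · exact hL.agreesFrom_getD_succ hdesc ht (hv t ht) (ih (by omega)) (ih (by omega) w hw p hp)
    · exact hp

theorem IsGreedyList.getLast?_eq (hL : IsGreedyList P α L) (hdesc : DescentTo P v)
    (hv : ∀ t, t + 1 < L.length → L.getD t [] ≠ v) : L.getLast? = some v := by
  have hT : L.length - 1 < L.length := by
    have : L ≠ [] := by
      rintro rfl
      exact absurd hL.1 (by simp)
    have := List.length_pos_iff.2 this
    omega
  suffices hlast : L.getD (L.length - 1) [] = v by
    rw [List.getLast?_eq_getElem?, ← hlast, List.getD_eq_getElem _ _ hT,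
      List.getElem?_eq_getElem hT]
  by_contra hw
  obtain ⟨i, q, hiq, hok, hPc, hq, hagree⟩ := hdesc _ (hL.prop_getD hT) hw
  have hmem : applyT (L.getD (L.length - 1) []) i q ∈ L.take (L.length - 1 + 1) := by
    rw [Nat.sub_add_cancel (by omega), List.take_length]
    exact hL.2.2.2.2 i q hok hPc
  exact hq (hL.agreesFrom_getD hdesc hv hT _ hmem q (hagree.applyT_of_getD_ne hok hiq hq)
    q le_rfl)

end Greedy

theorem getD_flatten_replicate (k s : ℕ) :
    (List.replicate k [false, true]).flatten.getD s false = decide (s < 2 * k ∧ s % 2 = 1) := by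
  induction k generalizing s with
  | zero => simp
  | succ k ih =>
    rw [List.replicate_succ, List.flatten_cons, List.cons_append, List.cons_append,
      List.nil_append]
    rcases s with _ | _ | s
    · simp
    · rw [List.getD_cons_succ, List.getD_cons_zero]
      exact (decide_eq_true (by omega)).symm
    · rw [List.getD_cons_succ, List.getD_cons_succ, ih, decide_eq_decide]
      omega

section Gamma

variable {n k : ℕ}

theorem count_gammaF : (gammaF n k).count true = k := by
  simp [gammaF, List.count_flatten, List.count_replicate]

variable (hn : 2 * k ≤ n)
include hn

theorem length_gammaF : (gammaF n k).length = n := by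
  simp only [gammaF, List.length_append, List.length_replicate, List.length_flatten,
    List.map_replicate, List.length_cons, List.length_nil, List.sum_replicate, smul_eq_mul]
  omega

theorem getD_gammaF (t : ℕ) :
    (gammaF n k).getD t false = decide (n - 2 * k < t ∧ t < n ∧ (t - (n - 2 * k)) % 2 = 1) := by
  rw [gammaF]
  by_cases ht : t < n - 2 * k
  · rw [List.getD_append _ _ _ _ (by simpa using ht),
      List.getD_replicate (x := false) (y := false) ht, Bool.false_eq, decide_eq_false_iff_not]
    omega
  · rw [List.getD_append_right _ _ _ _ (by simpa using ht), List.length_replicate,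
      getD_flatten_replicate, decide_eq_decide]
    omega

theorem getD_gammaF_eq_true_iff (t : ℕ) :
    (gammaF n k).getD t false = true ↔ n - 2 * k < t ∧ t < n ∧ (t - (n - 2 * k)) % 2 = 1 := by
  rw [getD_gammaF hn, decide_eq_true_iff]

theorem getD_gammaF_eq_false_iff (t : ℕ) :
    (gammaF n k).getD t false = false ↔
      ¬ (n - 2 * k < t ∧ t < n ∧ (t - (n - 2 * k)) % 2 = 1) := by
  rw [getD_gammaF hn, decide_eq_false_iff_not]

theorem eq_and_le_of_okT_gammaF {i j : ℕ} (hok : okT (gammaF n k) i j)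
    (hF : ¬ [true, true] <:+: applyT (gammaF n k) i j) :
    i = n - 2 * k + 1 ∧ j ≤ n - 2 * k := by
  have hij := hok.ne
  obtain ⟨hi, hj, hti, htj, hbet⟩ := hok
  have hγ := getD_gammaF_eq_true_iff hn
  rw [hγ] at hti
  rw [getD_gammaF_eq_false_iff hn] at htj
  have hfar : ∀ t, (gammaF n k).getD t false = true → ¬ (min i j < t ∧ t < max i j) :=
    fun t ht hmid => Bool.false_ne_true ((hbet t hmid.1 hmid.2).symm.trans ht)
  have hlonely :
      ∀ t, t ≠ i → (gammaF n k).getD t false = true → t + 1 ≠ j ∧ j + 1 ≠ t := by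
    intro t hti ht
    have htj : t ≠ j := by
      rintro rfl
      exact htj ((hγ t).1 ht)
    rw [List.infix_true_true_iff] at hF
    have hnew : (applyT (gammaF n k) i j).getD j false = true := by
      rw [getD_applyT hj, if_pos rfl]
    have hold : (applyT (gammaF n k) i j).getD t false = true := by
      rw [getD_applyT hj, if_neg htj, if_neg hti, ht]
    constructor <;> rintro rfl
    · exact hF ⟨t, hold, hnew⟩
    · exact hF ⟨j, hnew, hold⟩
  rw [length_gammaF hn] at hi hj
  rcases lt_or_gt_of_ne hij with hlt | hgt
  · have h2 := (hγ (i + 2)).2 ⟨by omega, by omega, by omega⟩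
    have := hfar _ h2
    have := hlonely _ (by omega) h2
    omega
  · have him : i = n - 2 * k + 1 := by
      by_contra hne
      have h2 := (hγ (i - 2)).2 ⟨by omega, by omega, by omega⟩
      have := hfar _ h2
      have := hlonely _ (by omega) h2
      omega
    exact ⟨him, by omega⟩

theorem memF.getD_gammaF_of_agreesFrom {w : List Bool} {q : ℕ} (hw : memF n k w)
    (hq : w.getD q false ≠ (gammaF n k).getD q false) (h : AgreesFrom (gammaF n k) w (q + 1)) :
    (gammaF n k).getD q false = true ∧ ∃ i < q, w.getD i false = true := by
  have hbelow := exists_getD_le_iff_of_agreesFrom (by rw [hw.1, length_gammaF hn])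
    (by rw [hw.2.1, count_gammaF]) h
  cases hwq : w.getD q false
  · rw [hwq] at hq
    have hγq : (gammaF n k).getD q false = true := eq_true_of_ne_false hq.symm
    obtain ⟨i, hiq, hi⟩ := hbelow.2 ⟨q, le_rfl, hγq⟩
    refine ⟨hγq, i, lt_of_le_of_ne hiq ?_, hi⟩
    rintro rfl
    rw [hwq] at hi
    exact Bool.false_ne_true hi
  · exfalso
    have hqn : q < n := hw.1 ▸ List.lt_length_of_getD_false_eq_true hwq
    rw [hwq] at hq
    have hγq : (gammaF n k).getD q false = false := eq_false_of_ne_true hq.symm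
    have hγq' : (gammaF n k).getD (q + 1) false = false := by
      rw [← h (q + 1) le_rfl]
      by_contra h'
      exact (List.infix_true_true_iff w).not.1 hw.2.2 ⟨q, hwq, eq_true_of_ne_false h'⟩
    obtain ⟨t, htq, ht⟩ := hbelow.1 ⟨q, le_rfl, hwq⟩
    rw [getD_gammaF_eq_false_iff hn] at hγq hγq'
    rw [getD_gammaF_eq_true_iff hn] at ht
    omega

theorem descentTo_memF_gammaF : DescentTo (memF n k) (gammaF n k) := by
  intro w hw hne
  obtain ⟨q, hq, hagree⟩ := exists_getD_ne_agreesFrom_succ (by rw [hw.1, length_gammaF hn]) hne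
  obtain ⟨hγq, i₀, hi₀q, hi₀⟩ := hw.getD_gammaF_of_agreesFrom hn hq hagree
  set P := fun i => w.getD i false = true
  set i := Nat.findGreatest P (q - 1)
  have hi : w.getD i false = true := Nat.findGreatest_spec (P := P) (by omega) hi₀
  have hiq : i < q := by
    have := Nat.findGreatest_le (P := P) (q - 1)
    omega
  have hbetween : ∀ t, i < t → t < q → w.getD t false = false := fun t h1 h2 => by
    simpa [P] using Nat.findGreatest_is_greatest (P := P) h1 (by omega)
  have hwq : w.getD q false = false := eq_false_of_ne_true (hγq ▸ hq)
  rw [getD_gammaF_eq_true_iff hn] at hγq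
  have hqn : q < w.length := by
    rw [hw.1]
    omega
  have hok : okT w i q :=
    ⟨List.lt_length_of_getD_false_eq_true hi, hqn, hi, hwq,
      fun t h1 h2 => hbetween t (by omega) (by omega)⟩
  refine ⟨i, q, hiq, hok, ⟨by rw [length_applyT, hw.1], by rw [hok.count_applyT, hw.2.1], ?_⟩,
    hq, hagree⟩
  refine not_infix_applyT hw.2.2 hqn (fun t h1 h2 => hbetween t (by omega) (by omega))
    (fun _ => ?_)
  rw [hagree (q + 1) le_rfl, getD_gammaF_eq_false_iff hn]
  omega

variable (hk : 0 < k)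
include hk

theorem okT_gammaF {j : ℕ} (hj : j ≤ n - 2 * k) : okT (gammaF n k) (n - 2 * k + 1) j := by
  refine ⟨by rw [length_gammaF hn]; omega, by rw [length_gammaF hn]; omega, ?_, ?_,
    fun t h1 h2 => ?_⟩
  · rw [getD_gammaF_eq_true_iff hn]
    omega
  all_goals
    rw [getD_gammaF_eq_false_iff hn]
    omega

theorem memF_applyT_gammaF {j : ℕ} (hj : j ≤ n - 2 * k) :
    memF n k (applyT (gammaF n k) (n - 2 * k + 1) j) := by
  have hok := okT_gammaF hn hk hj
  refine ⟨by rw [length_applyT, length_gammaF hn], by rw [hok.count_applyT, count_gammaF], ?_⟩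
  refine not_infix_applyT ?_ hok.2.1 (fun t ht _ => ?_) (fun _ => ?_)
  · rw [List.infix_true_true_iff]
    rintro ⟨t, h1, h2⟩
    rw [getD_gammaF_eq_true_iff hn] at h1 h2
    omega
  all_goals
    rw [getD_gammaF_eq_false_iff hn]
    omega

theorem okT_applyT_gammaF {i j : ℕ} (hi : i ≤ n - 2 * k) (hj : j ≤ n - 2 * k)
    (hij : i ≠ j) :
    okT (applyT (gammaF n k) (n - 2 * k + 1) i) i j := by
  have hlen : i < (gammaF n k).length := by
    rw [length_gammaF hn]
    omega
  refine ⟨by rw [length_applyT]; omega, by rw [length_applyT, length_gammaF hn]; omega, ?_, ?_,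
    fun t h1 h2 => ?_⟩
  · rw [getD_applyT hlen, if_pos rfl]
  all_goals
    rw [getD_applyT hlen, if_neg (by omega), if_neg (by omega), getD_gammaF_eq_false_iff hn]
    omega

theorem applyT_applyT_gammaF {i j : ℕ} (hi : i ≤ n - 2 * k) (hj : j ≤ n - 2 * k)
    (hij : i ≠ j) :
    applyT (applyT (gammaF n k) (n - 2 * k + 1) i) i j =
      applyT (gammaF n k) (n - 2 * k + 1) j := by
  have hlen : ∀ j ≤ n - 2 * k, j < (gammaF n k).length := fun j hj => by
    rw [length_gammaF hn]
    omega
  refine List.ext_getD_false (by simp only [length_applyT]) fun t => ?_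
  rw [getD_applyT (by rw [length_applyT]; exact hlen j hj), getD_applyT (hlen i hi),
    getD_applyT (hlen j hj)]
  split_ifs <;> first | rfl | (rw [eq_comm, getD_gammaF_eq_false_iff hn]; omega)

end Gamma

theorem IsGreedyList.getD_ne_gammaF {n k : ℕ} (hn : 2 * k ≤ n) {α : List Bool}
    {L : List (List Bool)} (hL : IsGreedyList (memF n k) α L) (hα : α ≠ gammaF n k) :
    ∀ t, t + 1 < L.length → L.getD t [] ≠ gammaF n k := by
  have hF : ∀ {t}, t < L.length → ¬ [true, true] <:+: L.getD t [] := fun ht =>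
    (hL.prop_getD ht).2.2
  have h0 := hL.getD_zero
  obtain ⟨-, hnodup, -, hstep, -⟩ := hL
  rintro (_ | s) ht hγ
  · exact hα (h0 ▸ hγ)
  obtain ⟨i, j, hok, hnext, hmin⟩ := hstep s (by omega)
  rw [hγ] at hnext
  have hprev : applyT (gammaF n k) j i = L.getD s [] := hnext ▸ hok.applyT_applyT_symm
  obtain ⟨rfl, hi⟩ :=
    eq_and_le_of_okT_gammaF hn (hnext ▸ hok.applyT_symm) (hprev ▸ hF (by omega))
  have hk : 0 < k := by
    have := hok.applyT_symm.1
    rw [← hnext, length_gammaF hn] at this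
    omega
  have hvisited :
      ∀ j ≤ n - 2 * k, applyT (gammaF n k) (n - 2 * k + 1) j ∈ L.take (s + 1) := by
    intro j hj
    by_cases hji : j = i
    · rw [hji, hprev]
      exact (List.mem_take_succ_iff_getD (by omega) []).2 (Or.inr rfl)
    have hmove := applyT_applyT_gammaF hn hk hi hj (Ne.symm hji)
    rw [hprev] at hmove
    by_contra hnew
    have := hmin i j (hprev ▸ okT_applyT_gammaF hn hk hi hj (Ne.symm hji))
      (hmove ▸ memF_applyT_gammaF hn hk hj) (hmove ▸ hnew)
    omega
  obtain ⟨i₂, j₂, hok₂, hnext₂, -⟩ := hstep (s + 1) ht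
  rw [hγ] at hok₂ hnext₂
  obtain ⟨rfl, hj₂⟩ := eq_and_le_of_okT_gammaF hn hok₂ (hnext₂ ▸ hF ht)
  exact hnodup.getD_not_mem_take (by omega) ht [] (hnext₂ ▸ hvisited j₂ hj₂)

theorem greedy_ends_with_gamma_general (n k : ℕ) (hn : 2 * k ≤ n) (α : List Bool)
    (hne : α ≠ gammaF n k) :
    ∀ L : List (List Bool), IsGreedyList (memF n k) α L →
      L.getLast? = some (gammaF n k) :=
  fun _ hL => hL.getLast?_eq (descentTo_memF_gammaF hn) (hL.getD_ne_gammaF hn hne)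

theorem greedy_ends_with_gamma (n k : ℕ) (hn : 2 * k ≤ n) (α : List Bool)
    (hα : memF n k α) (hne : α ≠ gammaF n k) :
    ∀ L : List (List Bool), IsGreedyList (memF n k) α L →
      L.getLast? = some (gammaF n k) :=
  greedy_ends_with_gamma_general n k hn α hne
end
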